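/- arXiv:1106.4295 — 6 statements merged into one kernel-verified Lean document; each statement's English description precedes it below -/
import Mathlib

section
/- If A and B are effects on a Hilbert space (operators with 0 ≤ A ≤ I, 0 ≤ B ≤ I), A is a projection (A² = A), and A = tB + (1-t)C for effects B, C and 0 < t < 1, then B = C = A. In other words, projections are extreme points of the convex set of effects. -/
set_option maxHeartbeats 1000000
set_option synthInstance.maxHeartbeats 1000000

open scoped ComplexOrder

variable {H : Type*} [NormedAddCommGroup H] [InnerProductSpace ℂ H] [CompleteSpace H]

lemma mem_setOf_nonneg_inter_unitClosedBall {𝒜 : Type*} [CStarAlgebra 𝒜] [PartialOrder 𝒜]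
    [StarOrderedRing 𝒜] {a : 𝒜} (h₀ : 0 ≤ a) (h₁ : a ≤ 1) :
    a ∈ {x : 𝒜 | 0 ≤ x} ∩ Metric.closedBall 0 1 :=
  ⟨h₀, mem_closedBall_zero_iff.mpr ((CStarAlgebra.norm_le_one_iff_of_nonneg a).mpr h₁)⟩

theorem stmt_0_general (A B C : H →L[ℂ] H)
    (hA₀ : 0 ≤ A) (hB₀ : 0 ≤ B) (hB₁ : B ≤ 1) (hC₀ : 0 ≤ C) (hC₁ : C ≤ 1)
    (hproj : A * A = A)
    (t : ℝ) (ht₀ : 0 < t) (ht₁ : t < 1)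
    (hmix : A = (t : ℂ) • B + ((1 - t : ℝ) : ℂ) • C) :
    B = A ∧ C = A := by
  have hA_extreme : A ∈ Set.extremePoints ℝ ({x | 0 ≤ x} ∩ Metric.closedBall 0 1) :=
    isStarProjection_iff_mem_extremePoints_setOfPred_nonneg_inter_unitClosedBall.mp
      ⟨hproj, hA₀.isSelfAdjoint⟩
  have hA_mem : A ∈ openSegment ℝ B C := by
    refine ⟨t, 1 - t, ht₀, sub_pos.mpr ht₁, add_sub_cancel t 1, ?_⟩
    simp only [hmix, Complex.coe_smul]
  exact (mem_extremePoints.mp hA_extreme).2 B (mem_setOf_nonneg_inter_unitClosedBall hB₀ hB₁)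
    C (mem_setOf_nonneg_inter_unitClosedBall hC₀ hC₁) hA_mem

/-- Projections are extreme points of the convex set of effects. -/
theorem stmt_0 (A B C : H →L[ℂ] H)
    (hA₀ : 0 ≤ A) (hA₁ : A ≤ 1) (hB₀ : 0 ≤ B) (hB₁ : B ≤ 1) (hC₀ : 0 ≤ C) (hC₁ : C ≤ 1)
    (hproj : A * A = A)
    (t : ℝ) (ht₀ : 0 < t) (ht₁ : t < 1)
    (hmix : A = (t : ℂ) • B + ((1 - t : ℝ) : ℂ) • C) :
    B = A ∧ C = A :=
  stmt_0_general A B C hA₀ hB₀ hB₁ hC₀ hC₁ hproj t ht₀ ht₁ hmix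
end

section
/- Let (A_n)_{n=1}^N be a discrete POVM (positive operators summing to the identity). Suppose that for every sequence (D_n) of self-adjoint operators with ‖D_n‖ ≤ 1 and Σ_n √A_n D_n √A_n = 0 one has √A_n D_n √A_n = 0 for all n. If moreover the A_n pairwise commute, then A_k A_l = 0 for all k ≠ l, and consequently each A_n is a projection. -/
/-!
For `k ≠ l` perturb only the `k`-th and `l`-th effects, by `D_k = A_l` and `D_l = -A_k`. Since
`√A_k` commutes with `A_l`, the conjugated perturbations are `A_k A_l` and `-A_l A_k = -A_k A_l`,
which cancel; the extremality hypothesis then forces `A_k A_l = 0`. Multiplying `∑ A_m = 1` by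
`A_n` leaves `A_n = A_n²`.
-/

lemma mul_self_eq_of_sum_eq_one_of_mul_eq_zero {ι R : Type*} [Fintype ι] [Semiring R]
    {a : ι → R} (hsum : ∑ m, a m = 1) (horth : ∀ k l, k ≠ l → a k * a l = 0) (n : ι) :
    a n * a n = a n :=
  calc a n * a n = ∑ m, a n * a m :=
        (Finset.sum_eq_single n (fun m _ hm ↦ horth n m hm.symm) (by simp)).symm
    _ = a n := by rw [← Finset.mul_sum, hsum, mul_one]

section CStarAlgebra

variable {A : Type*} [CStarAlgebra A] [PartialOrder A] [StarOrderedRing A]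

lemma Commute.sqrt_left {a b : A} (h : Commute a b) : Commute (CFC.sqrt a) b :=
  h.cfcₙ_nnreal NNReal.sqrt

lemma Commute.sqrt_mul_mul_sqrt {a b : A} (ha : 0 ≤ a) (h : Commute a b) :
    CFC.sqrt a * b * CFC.sqrt a = a * b := by
  rw [mul_assoc, ← h.sqrt_left.eq, ← mul_assoc, CFC.sqrt_mul_sqrt_self a]

lemma norm_le_one_of_sum_eq_one {ι : Type*} [Fintype ι] {a : ι → A} (hpos : ∀ n, 0 ≤ a n)
    (hsum : ∑ m, a m = 1) (n : ι) : ‖a n‖ ≤ 1 :=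
  (CStarAlgebra.norm_le_one_iff_of_nonneg _ (hpos n)).mpr <|
    hsum ▸ Finset.single_le_sum (fun m _ ↦ hpos m) (Finset.mem_univ n)

lemma mul_eq_zero_of_forall_sqrt_conj_eq_zero {ι : Type*} [Fintype ι] [DecidableEq ι]
    {a : ι → A} (hpos : ∀ n, 0 ≤ a n) (hnorm : ∀ n, ‖a n‖ ≤ 1)
    (hext : ∀ D : ι → A, (∀ n, IsSelfAdjoint (D n)) → (∀ n, ‖D n‖ ≤ 1) →
      (∑ n, CFC.sqrt (a n) * D n * CFC.sqrt (a n)) = 0 →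
      ∀ n, CFC.sqrt (a n) * D n * CFC.sqrt (a n) = 0)
    (hcomm : ∀ k l, Commute (a k) (a l)) {k l : ι} (hkl : k ≠ l) :
    a k * a l = 0 := by
  set D : ι → A := Pi.single k (a l) - Pi.single l (a k)
  have hsa : ∀ n, IsSelfAdjoint (a n) := fun n ↦ .of_nonneg (hpos n)
  have hD_sa : IsSelfAdjoint D := by simp [D, IsSelfAdjoint, (hsa _).star_eq]
  have hD_norm : ∀ n, ‖D n‖ ≤ 1 := by
    intro n
    by_cases hk : n = k <;> by_cases hl : n = l <;> simp_all [D]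
  have hconj_k : CFC.sqrt (a k) * D k * CFC.sqrt (a k) = a k * a l := by
    simpa [D, hkl] using (hcomm k l).sqrt_mul_mul_sqrt (hpos k)
  have hconj_l : CFC.sqrt (a l) * D l * CFC.sqrt (a l) = -(a k * a l) := by
    simpa [D, hkl.symm, (hcomm k l).eq] using (hcomm l k).sqrt_mul_mul_sqrt (hpos l)
  have hconj_sum : ∑ n, CFC.sqrt (a n) * D n * CFC.sqrt (a n) = 0 := by
    rw [Fintype.sum_eq_add k l hkl (fun n ⟨hk, hl⟩ ↦ by simp [D, hk, hl]), hconj_k, hconj_l,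
      add_neg_cancel]
  exact hconj_k ▸ hext D hD_sa.apply hD_norm hconj_sum k

end CStarAlgebra

variable {H : Type*} [NormedAddCommGroup H] [InnerProductSpace ℂ H] [CompleteSpace H]

/-- Extremality criterion plus commutativity forces a discrete POVM to be sharp:
if every self-adjoint contraction perturbation `(D_n)` with `∑ √A_n D_n √A_n = 0`
satisfies `√A_n D_n √A_n = 0`, and the `A_n` pairwise commute, then `A_k A_l = 0` for
`k ≠ l` and each `A_n` is a projection. -/
theorem stmt_4 {N : ℕ} (A : Fin N → H →L[ℂ] H)
    (hpos : ∀ n, 0 ≤ A n) (hsum : ∑ n, A n = 1)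
    (hext : ∀ D : Fin N → H →L[ℂ] H, (∀ n, IsSelfAdjoint (D n)) → (∀ n, ‖D n‖ ≤ 1) →
      (∑ n, CFC.sqrt (A n) * D n * CFC.sqrt (A n)) = 0 →
      ∀ n, CFC.sqrt (A n) * D n * CFC.sqrt (A n) = 0)
    (hcomm : ∀ k l, A k * A l = A l * A k) :
    (∀ k l, k ≠ l → A k * A l = 0) ∧ (∀ n, A n * A n = A n) := by
  have horth : ∀ k l, k ≠ l → A k * A l = 0 := fun _ _ ↦
    mul_eq_zero_of_forall_sqrt_conj_eq_zero hpos (norm_le_one_of_sum_eq_one hpos hsum) hext hcomm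
  exact ⟨horth, mul_self_eq_of_sum_eq_one_of_mul_eq_zero hsum horth⟩
end

section
/- If a discrete POVM (A_n)_{n=1}^N is an extreme point of the convex set of discrete POVMs on the same outcome set, then for any sequence (D_n) of self-adjoint operators with ‖D_n‖ ≤ 1 satisfying Σ_n √A_n D_n √A_n = 0, we have √A_n D_n √A_n = 0 for all n. -/
set_option maxHeartbeats 1000000
set_option synthInstance.maxHeartbeats 1000000

open scoped ComplexOrder

variable {H : Type*} [NormedAddCommGroup H] [InnerProductSpace ℂ H] [CompleteSpace H]

/-- A discrete POVM on the outcome set `{1, …, N}`: positive operators summing to `1`. -/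
def IsDiscretePOVM {N : ℕ} {H : Type*} [NormedAddCommGroup H] [InnerProductSpace ℂ H]
    [CompleteSpace H] (A : Fin N → H →L[ℂ] H) : Prop :=
  (∀ n, 0 ≤ A n) ∧ ∑ n, A n = 1

/-- Extremality of a discrete POVM in the convex set of discrete POVMs on the same
outcome set. -/
def IsExtremeDiscretePOVM {N : ℕ} {H : Type*} [NormedAddCommGroup H] [InnerProductSpace ℂ H]
    [CompleteSpace H] (A : Fin N → H →L[ℂ] H) : Prop :=
  IsDiscretePOVM A ∧
  ∀ (B C : Fin N → H →L[ℂ] H) (t : ℝ), 0 < t → t < 1 →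
    IsDiscretePOVM B → IsDiscretePOVM C →
    (∀ n, A n = (t : ℂ) • B n + ((1 - t : ℝ) : ℂ) • C n) → B = A ∧ C = A

/-!
Since `-1 ≤ D_n ≤ 1`, conjugating `1 ± D_n` by `√A_n` shows that `A_n ± √A_n D_n √A_n` are
positive; by `∑ √A_n D_n √A_n = 0` they sum to `1`. So both are POVMs, and `A` is their
midpoint; extremality forces them to coincide with `A`.
-/

section CStarAlgebra

variable {𝒜 : Type*} [CStarAlgebra 𝒜] [PartialOrder 𝒜] [StarOrderedRing 𝒜]

lemma IsSelfAdjoint.one_add_nonneg_of_norm_le_one {d : 𝒜} (hd : IsSelfAdjoint d)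
    (hnorm : ‖d‖ ≤ 1) : 0 ≤ 1 + d := by
  have hle : algebraMap ℝ 𝒜 ‖d‖ ≤ 1 := by
    simpa using algebraMap_mono 𝒜 hnorm
  rw [← neg_le_iff_add_nonneg']
  exact (neg_le_neg hle).trans hd.neg_algebraMap_norm_le_self

lemma CFC.add_sqrt_mul_mul_sqrt_nonneg {a d : 𝒜} (ha : 0 ≤ a) (hd : IsSelfAdjoint d)
    (hnorm : ‖d‖ ≤ 1) : 0 ≤ a + sqrt a * d * sqrt a := by
  have h := conjugate_nonneg_of_nonneg (hd.one_add_nonneg_of_norm_le_one hnorm)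
    (sqrt_nonneg a)
  rwa [mul_add, add_mul, mul_one, sqrt_mul_sqrt_self a ha] at h

lemma CFC.sub_sqrt_mul_mul_sqrt_nonneg {a d : 𝒜} (ha : 0 ≤ a) (hd : IsSelfAdjoint d)
    (hnorm : ‖d‖ ≤ 1) : 0 ≤ a - sqrt a * d * sqrt a := by
  simpa [sub_eq_add_neg] using add_sqrt_mul_mul_sqrt_nonneg ha hd.neg (by rwa [norm_neg])

end CStarAlgebra

lemma IsExtremeDiscretePOVM.eq_zero_of_add_of_sub {N : ℕ} {A X : Fin N → H →L[ℂ] H}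
    (hA : IsExtremeDiscretePOVM A) (hadd : IsDiscretePOVM (A + X))
    (hsub : IsDiscretePOVM (A - X)) : X = 0 := by
  have hmid : ∀ n, A n = ((1 / 2 : ℝ) : ℂ) • (A + X) n + ((1 - 1 / 2 : ℝ) : ℂ) • (A - X) n := by
    intro n
    simp only [Pi.add_apply, Pi.sub_apply]
    push_cast
    module
  have h := (hA.2 _ _ (1 / 2) (by norm_num) (by norm_num) hadd hsub hmid).1
  simpa using h

/-- If a discrete POVM is extreme, then any self-adjoint contraction perturbation `(D_n)`
with `∑ √A_n D_n √A_n = 0` satisfies `√A_n D_n √A_n = 0` for all `n`. -/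
theorem stmt_5 {N : ℕ} (A : Fin N → H →L[ℂ] H)
    (hext : IsExtremeDiscretePOVM A)
    (D : Fin N → H →L[ℂ] H) (hsa : ∀ n, IsSelfAdjoint (D n)) (hnorm : ∀ n, ‖D n‖ ≤ 1)
    (hzero : (∑ n, CFC.sqrt (A n) * D n * CFC.sqrt (A n)) = 0) :
    ∀ n, CFC.sqrt (A n) * D n * CFC.sqrt (A n) = 0 := by
  obtain ⟨hpos, hsum⟩ := hext.1
  have hadd : IsDiscretePOVM (A + fun n => CFC.sqrt (A n) * D n * CFC.sqrt (A n)) :=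
    ⟨fun n => CFC.add_sqrt_mul_mul_sqrt_nonneg (hpos n) (hsa n) (hnorm n), by
      simp only [Pi.add_apply, Finset.sum_add_distrib, hsum, hzero, add_zero]⟩
  have hsub : IsDiscretePOVM (A - fun n => CFC.sqrt (A n) * D n * CFC.sqrt (A n)) :=
    ⟨fun n => CFC.sub_sqrt_mul_mul_sqrt_nonneg (hpos n) (hsa n) (hnorm n), by
      simp only [Pi.sub_apply, Finset.sum_sub_distrib, hsum, hzero, sub_zero]⟩
  exact congrFun (hext.eq_zero_of_add_of_sub hadd hsub)
end

section
/- For a bounded measurable function f with 0 ≤ f ≤ 1 and a PVM E, the operator ∫ f dE is a projection if and only if f ∈ {0,1} E-almost everywhere. -/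
/-!
If `T` is idempotent, write `x = T x + (x - T x)`. Since `T` fixes `T x`,
`∫ f dμ_{T x} = ‖T x‖² = μ_{T x}(Ω)`, which together with `f ≤ 1` forces `f = 1` `μ_{T x}`-a.e.;
since `T` kills `x - T x`, `f = 0` `μ_{x - T x}`-a.e. Hence `E` annihilates both summands on
`{f ∉ {0, 1}}`, because `μ_x(X) = ‖E(X) x‖²`. Conversely, if `f ∈ {0, 1}` off an `E`-null set,
then `T` and the projection `E({f = 1})` have the same real quadratic form, and two self-adjoint
operators with the same real quadratic form coincide.
-/

set_option maxHeartbeats 1000000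
set_option synthInstance.maxHeartbeats 1000000

open scoped ComplexOrder

variable {H : Type*} [NormedAddCommGroup H] [InnerProductSpace ℂ H] [CompleteSpace H]

open MeasureTheory

/-- A projection-valued measure on a measurable space, acting on `H`, together with its
family of diagonal scalar measures `μ x = ⟪E(·) x, x⟫` (used to express spectral
integrals weakly: `T = ∫ f dE` iff `⟪T x, x⟫ = ∫ f dμ_x` for all `x`). -/
structure PVM (Ω : Type*) [MeasurableSpace Ω] (H : Type*) [NormedAddCommGroup H]
    [InnerProductSpace ℂ H] [CompleteSpace H] where
  toFun : Set Ω → (H →L[ℂ] H)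
  pos' : ∀ X, MeasurableSet X → 0 ≤ toFun X
  proj' : ∀ X, MeasurableSet X → toFun X * toFun X = toFun X
  empty' : toFun ∅ = 0
  total' : toFun Set.univ = 1
  additive' : ∀ (f : ℕ → Set Ω), (∀ n, MeasurableSet (f n)) → Pairwise (Function.onFun Disjoint f) →
    ∀ x y : H, HasSum (fun n => (inner ℂ (toFun (f n) x) y : ℂ)) (inner ℂ (toFun (⋃ n, f n) x) y)
  μ : H → Measure Ω
  μ_spec : ∀ (x : H) (X : Set Ω), MeasurableSet X →
    ((μ x) X).toReal = ((inner ℂ (toFun X x) x : ℂ)).re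
  μ_fin : ∀ x : H, IsFiniteMeasure (μ x)

theorem IsStarProjection.inner_apply_self {𝕜 E : Type*} [RCLike 𝕜] [NormedAddCommGroup E]
    [InnerProductSpace 𝕜 E] [CompleteSpace E] {P : E →L[𝕜] E} (hP : IsStarProjection P) (x : E) :
    inner 𝕜 (P x) x = ((‖P x‖ ^ 2 : ℝ) : 𝕜) := by
  have hPP : P (P x) = P x := congr($(hP.isIdempotentElem.eq) x)
  rw [← hPP, ← ContinuousLinearMap.adjoint_inner_right, ← ContinuousLinearMap.star_eq_adjoint,
    hP.isSelfAdjoint.star_eq, hPP, inner_self_eq_norm_sq_to_K, RCLike.ofReal_pow]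

theorem IsSelfAdjoint.ext_of_re_inner_apply_self {𝕜 E : Type*} [RCLike 𝕜] [NormedAddCommGroup E]
    [InnerProductSpace 𝕜 E] [CompleteSpace E] {S T : E →L[𝕜] E} (hS : IsSelfAdjoint S)
    (hT : IsSelfAdjoint T) (h : ∀ x, RCLike.re (inner 𝕜 (S x) x) = RCLike.re (inner 𝕜 (T x) x)) :
    S = T := by
  have hST : ((S - T : E →L[𝕜] E) : E →ₗ[𝕜] E).IsSymmetric :=
    ContinuousLinearMap.isSelfAdjoint_iff_isSymmetric.mp (hS.sub hT)
  rw [← sub_eq_zero, ← ContinuousLinearMap.coe_inj, ContinuousLinearMap.toLinearMap_zero,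
    ← hST.inner_map_self_eq_zero]
  intro x
  rw [← hST.coe_re_inner_apply_self]
  simp [inner_sub_left, h x]

theorem MeasureTheory.ae_eq_one_of_integral_eq_measureReal_univ {α : Type*} [MeasurableSpace α]
    {μ : Measure α} [IsFiniteMeasure μ] {f : α → ℝ} (hfi : Integrable f μ) (hf₁ : ∀ᵐ y ∂μ, f y ≤ 1)
    (h : ∫ y, f y ∂μ = μ.real Set.univ) : ∀ᵐ y ∂μ, f y = 1 := by
  refine (integral_eq_iff_of_ae_le hfi (integrable_const 1) hf₁).mp ?_
  simpa using h

namespace PVM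

variable {Ω : Type*} [MeasurableSpace Ω] (E : PVM Ω H) {X : Set Ω}

instance (x : H) : IsFiniteMeasure (E.μ x) := E.μ_fin x

theorem isStarProjection (hX : MeasurableSet X) : IsStarProjection (E.toFun X) :=
  ⟨E.proj' X hX, ((ContinuousLinearMap.nonneg_iff_isPositive _).mp (E.pos' X hX)).isSelfAdjoint⟩

theorem measureReal_eq_norm_sq (hX : MeasurableSet X) (x : H) :
    (E.μ x).real X = ‖E.toFun X x‖ ^ 2 := by
  rw [measureReal_def, E.μ_spec x X hX, (E.isStarProjection hX).inner_apply_self]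
  exact Complex.ofReal_re _

theorem measureReal_univ (x : H) : (E.μ x).real Set.univ = ‖x‖ ^ 2 := by
  rw [E.measureReal_eq_norm_sq MeasurableSet.univ, E.total', one_apply_eq_self]

theorem apply_eq_zero_of_measure_eq_zero (hX : MeasurableSet X) {x : H} (h : E.μ x X = 0) :
    E.toFun X x = 0 := by
  have := E.measureReal_eq_norm_sq hX x
  rw [measureReal_def, h, ENNReal.toReal_zero, eq_comm] at this
  simpa using this

theorem measure_eq_zero_of_toFun_eq_zero (hX : MeasurableSet X) (h : E.toFun X = 0) (x : H) :
    E.μ x X = 0 := by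
  rw [← measureReal_eq_zero_iff, E.measureReal_eq_norm_sq hX, h]
  simp

/-- The weak form of `T = ∫ f dE`. -/
def HasIntegral (f : Ω → ℝ) (T : H →L[ℂ] H) : Prop :=
  ∀ x : H, (inner ℂ (T x) x).re = ∫ y, f y ∂(E.μ x)

variable {E} {f g : Ω → ℝ} {T : H →L[ℂ] H}

theorem hasIntegral_indicator_one (hX : MeasurableSet X) :
    E.HasIntegral (X.indicator 1) (E.toFun X) := fun x => by
  rw [integral_indicator_one hX, measureReal_def, E.μ_spec x X hX]

theorem HasIntegral.congr {Y : Set Ω} (hT : E.HasIntegral f T) (hY : MeasurableSet Y)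
    (hEY : E.toFun Y = 0) (hfg : ∀ y ∉ Y, f y = g y) : E.HasIntegral g T := fun x => by
  rw [hT x]
  refine integral_congr_ae (measure_eq_zero_iff_ae_notMem.mp ?_ |>.mono hfg)
  exact E.measure_eq_zero_of_toFun_eq_zero hY hEY x

theorem HasIntegral.eq_of_isSelfAdjoint {T' : H →L[ℂ] H} (hT : E.HasIntegral f T)
    (hT' : E.HasIntegral f T') (hTsa : IsSelfAdjoint T) (hT'sa : IsSelfAdjoint T') : T = T' :=
  hTsa.ext_of_re_inner_apply_self hT'sa fun x => (hT x).trans (hT' x).symm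

theorem HasIntegral.ae_eq_zero_of_apply_eq_zero (hT : E.HasIntegral f T) (hf₀ : ∀ y, 0 ≤ f y)
    {z : H} (hfi : Integrable f (E.μ z)) (hz : T z = 0) : f =ᵐ[E.μ z] 0 := by
  refine (integral_eq_zero_iff_of_nonneg hf₀ hfi).mp ?_
  rw [← hT z, hz]
  simp

theorem HasIntegral.ae_eq_one_of_apply_eq_self (hT : E.HasIntegral f T) (hf₁ : ∀ y, f y ≤ 1)
    {z : H} (hfi : Integrable f (E.μ z)) (hz : T z = z) : ∀ᵐ y ∂E.μ z, f y = 1 := by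
  refine ae_eq_one_of_integral_eq_measureReal_univ hfi (.of_forall hf₁) ?_
  rw [← hT z, hz, E.measureReal_univ]
  exact inner_self_eq_norm_sq (𝕜 := ℂ) z

theorem HasIntegral.toFun_eq_zero_of_isIdempotentElem (hT : E.HasIntegral f T)
    (hTT : IsIdempotentElem T) (hf : Measurable f) (hf₀ : ∀ y, 0 ≤ f y) (hf₁ : ∀ y, f y ≤ 1) :
    E.toFun (f ⁻¹' {0, 1}ᶜ) = 0 := by
  have hfi : ∀ x, Integrable f (E.μ x) := fun x =>
    .of_bound hf.aestronglyMeasurable 1 (.of_forall fun y => by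
      simpa [abs_of_nonneg (hf₀ y)] using hf₁ y)
  have hY : MeasurableSet (f ⁻¹' {0, 1}ᶜ) := hf (Set.toFinite _).measurableSet.compl
  ext x
  have hrange : T (T x) = T x := congr($(hTT.eq) x)
  have hker : T (x - T x) = 0 := by rw [map_sub, hrange, sub_self]
  have h₁ : E.toFun _ (T x) = 0 := E.apply_eq_zero_of_measure_eq_zero hY <|
    measure_mono_null (fun y hy h => hy (.inr h))
      (ae_iff.mp (hT.ae_eq_one_of_apply_eq_self hf₁ (hfi _) hrange))
  have h₀ : E.toFun _ (x - T x) = 0 := E.apply_eq_zero_of_measure_eq_zero hY <|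
    measure_mono_null (fun y hy h => hy (.inl h)) (hT.ae_eq_zero_of_apply_eq_zero hf₀ (hfi _) hker)
  rw [← add_sub_cancel (T x) x, map_add, h₁, h₀, add_zero, zero_apply]

end PVM

/-- For a measurable `f` with `0 ≤ f ≤ 1` and a PVM `E`, the spectral integral
`T = ∫ f dE` (expressed weakly via the diagonal measures of `E`) is a projection if and
only if `f ∈ {0, 1}` `E`-almost everywhere. -/
theorem stmt_12 {Ω : Type*} [MeasurableSpace Ω] (E : PVM Ω H)
    (f : Ω → ℝ) (hf : Measurable f) (hf₀ : ∀ y, 0 ≤ f y) (hf₁ : ∀ y, f y ≤ 1)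
    (T : H →L[ℂ] H) (hT : IsSelfAdjoint T)
    (hint : ∀ x : H, ((inner ℂ (T x) x : ℂ)).re = ∫ y, f y ∂(E.μ x)) :
    T * T = T ↔
      ∃ Y : Set Ω, MeasurableSet Y ∧ E.toFun Y = 0 ∧ ∀ y ∉ Y, f y = 0 ∨ f y = 1 := by
  have hTf : E.HasIntegral f T := hint
  constructor
  · intro hTT
    refine ⟨f ⁻¹' {0, 1}ᶜ, hf (Set.toFinite _).measurableSet.compl,
      hTf.toFun_eq_zero_of_isIdempotentElem hTT hf hf₀ hf₁, fun y hy => not_not.mp hy⟩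
  · rintro ⟨Y, hY, hEY, hfY⟩
    have hS : MeasurableSet {y | f y = 1} := hf (measurableSet_singleton 1)
    have hf_indicator : ∀ y ∉ Y, f y = {y | f y = 1}.indicator 1 y := fun y hy => by
      rcases hfY y hy with h | h <;> simp [Set.indicator, h]
    have hTS : T = E.toFun {y | f y = 1} :=
      (hTf.congr hY hEY hf_indicator).eq_of_isSelfAdjoint (PVM.hasIntegral_indicator_one hS) hT
        (E.isStarProjection hS).isSelfAdjoint
    rw [hTS]
    exact E.proj' _ hS
end

section
/- Let A, B be positive operators with A + B ≤ I and AB = BA. If the two-element family is such that the only self-adjoint contractions D₁, D₂ with √A D₁ √A + √B D₂ √B = 0 satisfy √A D₁ √A = √B D₂ √B = 0, then AB = 0. -/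
set_option maxHeartbeats 1000000
set_option synthInstance.maxHeartbeats 1000000

open scoped ComplexOrder

variable {H : Type*} [NormedAddCommGroup H] [InnerProductSpace ℂ H] [CompleteSpace H]

/-!
Put `D₁ = √A B² √A` and `D₂ = -√B A² √B`. Both are self-adjoint contractions because
`‖A‖, ‖B‖ ≤ 1`, and `√A D₁ √A + √B D₂ √B = A B² A - B A² B = (AB)(BA) - (BA)(AB) = 0` by
commutativity. The hypothesis then forces `A B² A = (BA)⋆(BA) = 0`, so `BA = AB = 0` by the
C⋆-identity.
-/

section CStarAlgebra

variable {𝒜 : Type*} [CStarAlgebra 𝒜] [PartialOrder 𝒜] [StarOrderedRing 𝒜]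

lemma norm_le_one_of_add_le_one {a b : 𝒜} (ha : 0 ≤ a) (hb : 0 ≤ b) (hab : a + b ≤ 1) :
    ‖a‖ ≤ 1 :=
  (CStarAlgebra.norm_le_one_iff_of_nonneg a ha).mpr ((le_add_of_nonneg_right hb).trans hab)

lemma CFC.sqrt_mul_sqrt_mul_mul_sqrt_mul_sqrt {a : 𝒜} (ha : 0 ≤ a) (c : 𝒜) :
    CFC.sqrt a * (CFC.sqrt a * c * CFC.sqrt a) * CFC.sqrt a = a * c * a := by
  calc CFC.sqrt a * (CFC.sqrt a * c * CFC.sqrt a) * CFC.sqrt a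
      = (CFC.sqrt a * CFC.sqrt a) * c * (CFC.sqrt a * CFC.sqrt a) := by simp only [mul_assoc]
    _ = a * c * a := by rw [CFC.sqrt_mul_sqrt_self a ha]

lemma CFC.isSelfAdjoint_sqrt_mul_mul_sqrt (a : 𝒜) {d : 𝒜} (hd : IsSelfAdjoint d) :
    IsSelfAdjoint (CFC.sqrt a * d * CFC.sqrt a) :=
  hd.conjugate_self (CFC.sqrt_nonneg a).isSelfAdjoint

lemma CFC.norm_sqrt_mul_mul_sqrt_le {a : 𝒜} (ha : 0 ≤ a) (d : 𝒜) :
    ‖CFC.sqrt a * d * CFC.sqrt a‖ ≤ ‖d‖ * ‖a‖ := by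
  have hsqrt : ‖CFC.sqrt a‖ * ‖CFC.sqrt a‖ = ‖a‖ := by
    rw [CFC.norm_sqrt a ha, Real.mul_self_sqrt (norm_nonneg a)]
  calc ‖CFC.sqrt a * d * CFC.sqrt a‖ ≤ ‖CFC.sqrt a‖ * ‖d‖ * ‖CFC.sqrt a‖ := norm_mul₃_le
    _ = ‖d‖ * ‖a‖ := by rw [← hsqrt]; ring

lemma CFC.norm_sqrt_mul_mul_self_mul_sqrt_le_one {a b : 𝒜} (ha : 0 ≤ a) (ha₁ : ‖a‖ ≤ 1)
    (hb₁ : ‖b‖ ≤ 1) : ‖CFC.sqrt a * (b * b) * CFC.sqrt a‖ ≤ 1 := by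
  have hbb : ‖b * b‖ ≤ 1 := (norm_mul_le b b).trans (mul_le_one₀ hb₁ (norm_nonneg b) hb₁)
  exact (CFC.norm_sqrt_mul_mul_sqrt_le ha _).trans (mul_le_one₀ hbb (norm_nonneg a) ha₁)

end CStarAlgebra

lemma mul_eq_zero_of_mul_mul_self_mul_eq_zero {R : Type*} [NonUnitalNormedRing R] [StarRing R]
    [CStarRing R] {a b : R} (ha : IsSelfAdjoint a)
    (hb : IsSelfAdjoint b) (hab : Commute a b) (h : a * (b * b) * a = 0) : a * b = 0 := by
  have hstar : a * (b * b) * a = star (b * a) * (b * a) := by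
    rw [star_mul, ha.star_eq, hb.star_eq]
    simp only [mul_assoc]
  rw [hstar, CStarRing.star_mul_self_eq_zero_iff] at h
  rw [hab.eq, h]

lemma Commute.mul_mul_self_mul {R : Type*} [Semigroup R] {a b : R} (h : Commute a b) :
    a * (b * b) * a = b * (a * a) * b :=
  calc a * (b * b) * a = (a * b) * (b * a) := by simp only [mul_assoc]
    _ = (b * a) * (a * b) := by rw [h.eq]
    _ = b * (a * a) * b := by simp only [mul_assoc]

/-- If `A, B ≥ 0` commute, `A + B ≤ 1`, and the only self-adjoint contractions `D₁, D₂` with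
`√A D₁ √A + √B D₂ √B = 0` satisfy `√A D₁ √A = √B D₂ √B = 0`, then `A B = 0`. -/
theorem stmt_15 (A B : H →L[ℂ] H) (hA : 0 ≤ A) (hB : 0 ≤ B)
    (hsum : A + B ≤ 1) (hcomm : A * B = B * A)
    (hext : ∀ D₁ D₂ : H →L[ℂ] H, IsSelfAdjoint D₁ → IsSelfAdjoint D₂ →
      ‖D₁‖ ≤ 1 → ‖D₂‖ ≤ 1 →
      CFC.sqrt A * D₁ * CFC.sqrt A + CFC.sqrt B * D₂ * CFC.sqrt B = 0 →
      CFC.sqrt A * D₁ * CFC.sqrt A = 0 ∧ CFC.sqrt B * D₂ * CFC.sqrt B = 0) :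
    A * B = 0 := by
  have hA₁ : ‖A‖ ≤ 1 := norm_le_one_of_add_le_one hA hB hsum
  have hB₁ : ‖B‖ ≤ 1 := norm_le_one_of_add_le_one hB hA (add_comm A B ▸ hsum)
  have hBB : IsSelfAdjoint (B * B) := by
    simpa only [hB.isSelfAdjoint.star_eq] using IsSelfAdjoint.star_mul_self B
  have hAA : IsSelfAdjoint (A * A) := by
    simpa only [hA.isSelfAdjoint.star_eq] using IsSelfAdjoint.star_mul_self A
  obtain ⟨hABBA, -⟩ := hext (CFC.sqrt A * (B * B) * CFC.sqrt A)
    (-(CFC.sqrt B * (A * A) * CFC.sqrt B))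
    (CFC.isSelfAdjoint_sqrt_mul_mul_sqrt A hBB)
    (CFC.isSelfAdjoint_sqrt_mul_mul_sqrt B hAA).neg
    (CFC.norm_sqrt_mul_mul_self_mul_sqrt_le_one hA hA₁ hB₁)
    (by rw [norm_neg]; exact CFC.norm_sqrt_mul_mul_self_mul_sqrt_le_one hB hB₁ hA₁)
    (by rw [mul_neg, neg_mul, CFC.sqrt_mul_sqrt_mul_mul_sqrt_mul_sqrt hA,
      CFC.sqrt_mul_sqrt_mul_mul_sqrt_mul_sqrt hB, Commute.mul_mul_self_mul hcomm, add_neg_cancel])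
  rw [CFC.sqrt_mul_sqrt_mul_mul_sqrt_mul_sqrt hA] at hABBA
  exact mul_eq_zero_of_mul_mul_self_mul_eq_zero hA.isSelfAdjoint hB.isSelfAdjoint hcomm hABBA
end

section
/- Let (A_n) be a discrete commutative POVM such that A_k A_l = 0 for all k ≠ l fails, i.e., A_k A_l ≠ 0 for some k ≠ l. Then (A_n) is not extreme: it is a proper convex combination of two distinct POVMs, namely A_n ± √A_n D_n √A_n with D_k = √A_k A_l² √A_k, D_l = −√A_l A_k² √A_l, D_n = 0 otherwise. -/
set_option maxHeartbeats 1000000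
set_option synthInstance.maxHeartbeats 1000000

open scoped ComplexOrder

variable {H : Type*} [NormedAddCommGroup H] [InnerProductSpace ℂ H] [CompleteSpace H]

/-! A commuting pair with `A_k A_l ≠ 0` lets one move the nonzero positive operator
`P = A_k A_l² A_k = A_l A_k² A_l` from outcome `l` to outcome `k` or back: since
`A_n² ≤ A_n ≤ 1` for every outcome, `P ≤ A_k` and `P ≤ A_l`, so both `A + (δ_k - δ_l) P` and
`A - (δ_k - δ_l) P` are again POVMs, and `A` is their midpoint. On outcomes `k` and `l` the
operator `√A_n D_n √A_n` is exactly `±P`. -/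

theorem mul_conj_mul_eq_of_mul_self_eq {R : Type*} [Semigroup R] {s a : R} (hs : s * s = a)
    (x : R) : s * (s * x * s) * s = a * x * a := by
  subst hs
  simp only [mul_assoc]

theorem Commute.conj_mul_self_comm {M : Type*} [Monoid M] {a b : M} (h : Commute a b) :
    b * (a * a) * b = a * (b * b) * a :=
  calc b * (a * a) * b = (b * a) * (a * b) := by simp only [mul_assoc]
    _ = (a * b) * (b * a) := by rw [h.eq]
    _ = a * (b * b) * a := by simp only [mul_assoc]

theorem conj_mul_self_eq_star_mul_self {R : Type*} [Semigroup R] [StarMul R] {a b : R}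
    (ha : IsSelfAdjoint a) (hb : IsSelfAdjoint b) : a * (b * b) * a = star (b * a) * (b * a) := by
  rw [star_mul, ha.star_eq, hb.star_eq]
  simp only [mul_assoc]

theorem conj_mul_self_eq_zero_iff {R : Type*} [NonUnitalNormedRing R] [StarRing R] [CStarRing R]
    {a b : R} (ha : IsSelfAdjoint a) (hb : IsSelfAdjoint b) : a * (b * b) * a = 0 ↔ b * a = 0 := by
  rw [conj_mul_self_eq_star_mul_self ha hb, CStarRing.star_mul_self_eq_zero_iff]

section CStarAlgebra

variable {A : Type*} [CStarAlgebra A] [PartialOrder A] [StarOrderedRing A]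

theorem mul_self_le_self_of_le_one {a : A} (ha₀ : 0 ≤ a) (ha₁ : a ≤ 1) : a * a ≤ a := by
  obtain ⟨s, hs, rfl⟩ : ∃ s : A, IsSelfAdjoint s ∧ s * s = a :=
    ⟨CFC.sqrt a, .of_nonneg (CFC.sqrt_nonneg a), CFC.sqrt_mul_sqrt_self a ha₀⟩
  calc s * s * (s * s) = s * (s * s) * s := by simp only [mul_assoc]
    _ ≤ s * 1 * s := hs.conjugate_le_conjugate ha₁
    _ = s * s := by rw [mul_one]

theorem conj_mul_self_le_of_le_one {a b : A} (ha₀ : 0 ≤ a) (ha₁ : a ≤ 1) (hb₀ : 0 ≤ b)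
    (hb₁ : b ≤ 1) : a * (b * b) * a ≤ a :=
  calc a * (b * b) * a ≤ a * 1 * a :=
        ha₀.isSelfAdjoint.conjugate_le_conjugate ((mul_self_le_self_of_le_one hb₀ hb₁).trans hb₁)
    _ = a * a := by rw [mul_one]
    _ ≤ a := mul_self_le_self_of_le_one ha₀ ha₁

theorem conj_mul_self_nonneg {a b : A} (ha : IsSelfAdjoint a) (hb : IsSelfAdjoint b) :
    0 ≤ a * (b * b) * a :=
  conj_mul_self_eq_star_mul_self ha hb ▸ star_mul_self_nonneg _

end CStarAlgebra

namespace IsDiscretePOVM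

variable {N : ℕ} {A : Fin N → H →L[ℂ] H}

theorem le_one (hA : IsDiscretePOVM A) (n : Fin N) : A n ≤ 1 :=
  hA.2 ▸ Finset.single_le_sum (fun i _ => hA.1 i) (Finset.mem_univ n)

theorem add_single_sub_single (hA : IsDiscretePOVM A) {k l : Fin N} (hkl : k ≠ l)
    {P : H →L[ℂ] H} (hP₀ : 0 ≤ P) (hPl : P ≤ A l) :
    IsDiscretePOVM fun n => A n + (Pi.single k P - Pi.single l P : Fin N → H →L[ℂ] H) n := by
  refine ⟨fun n => ?_, ?_⟩
  · rcases eq_or_ne n k with rfl | hnk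
    · simpa [hkl] using add_nonneg (hA.1 n) hP₀
    · rcases eq_or_ne n l with rfl | hnl
      · simpa [hnk] using hPl
      · simpa [hnk, hnl] using hA.1 n
  · simp [Finset.sum_add_distrib, hA.2]

theorem sub_single_sub_single (hA : IsDiscretePOVM A) {k l : Fin N} (hkl : k ≠ l)
    {P : H →L[ℂ] H} (hP₀ : 0 ≤ P) (hPk : P ≤ A k) :
    IsDiscretePOVM fun n => A n - (Pi.single k P - Pi.single l P : Fin N → H →L[ℂ] H) n := by
  simpa only [Pi.sub_apply, sub_sub_eq_add_sub, add_sub_assoc] using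
    hA.add_single_sub_single hkl.symm hP₀ hPk

end IsDiscretePOVM

theorem not_isExtremeDiscretePOVM_of_eq_midpoint {N : ℕ} {A B C : Fin N → H →L[ℂ] H}
    (hB : IsDiscretePOVM B) (hC : IsDiscretePOVM C)
    (hmid : ∀ n, A n = ((1 : ℂ) / 2) • B n + ((1 : ℂ) / 2) • C n) (hBA : B ≠ A) :
    ¬ IsExtremeDiscretePOVM A := fun hext =>
  hBA (hext.2 B C (1 / 2) (by norm_num) (by norm_num) hB hC (by norm_num [hmid])).1

theorem eq_half_smul_add_add_half_smul_sub {M : Type*} [AddCommGroup M] [Module ℂ M]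
    (a e : M) : a = ((1 : ℂ) / 2) • (a + e) + ((1 : ℂ) / 2) • (a - e) := by
  rw [← smul_add, add_add_sub_cancel, ← two_smul ℂ a, smul_smul]
  norm_num

/-- A commutative discrete POVM with `A_k A_l ≠ 0` for some `k ≠ l` is not extreme: it is
the midpoint of the two distinct POVMs `A_n ± √A_n D_n √A_n`, with
`D_k = √A_k A_l² √A_k`, `D_l = −√A_l A_k² √A_l` and `D_n = 0` otherwise. -/
theorem stmt_19 {N : ℕ} (A : Fin N → H →L[ℂ] H)
    (hpovm : IsDiscretePOVM A)
    (hcomm : ∀ k l, A k * A l = A l * A k)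
    (k l : Fin N) (hkl : k ≠ l) (hne : A k * A l ≠ 0)
    (D : Fin N → H →L[ℂ] H)
    (hD : D = fun n =>
      if n = k then CFC.sqrt (A k) * (A l * A l) * CFC.sqrt (A k)
      else if n = l then -(CFC.sqrt (A l) * (A k * A k) * CFC.sqrt (A l))
      else 0) :
    IsDiscretePOVM (fun n => A n + CFC.sqrt (A n) * D n * CFC.sqrt (A n)) ∧
    IsDiscretePOVM (fun n => A n - CFC.sqrt (A n) * D n * CFC.sqrt (A n)) ∧
    (fun n => A n + CFC.sqrt (A n) * D n * CFC.sqrt (A n)) ≠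
      (fun n => A n - CFC.sqrt (A n) * D n * CFC.sqrt (A n)) ∧
    (∀ n, A n = ((1 : ℂ) / 2) • (A n + CFC.sqrt (A n) * D n * CFC.sqrt (A n)) +
      ((1 : ℂ) / 2) • (A n - CFC.sqrt (A n) * D n * CFC.sqrt (A n))) ∧
    ¬ IsExtremeDiscretePOVM A := by
  have hsa n : IsSelfAdjoint (A n) := (hpovm.1 n).isSelfAdjoint
  set P := A k * (A l * A l) * A k with hP
  have hPsymm : A l * (A k * A k) * A l = P := Commute.conj_mul_self_comm (hcomm k l)
  have hP₀ : 0 ≤ P := conj_mul_self_nonneg (hsa k) (hsa l)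
  have hPne : P ≠ 0 := by rwa [Ne, conj_mul_self_eq_zero_iff (hsa k) (hsa l), ← hcomm]
  have hP_le n m : A n * (A m * A m) * A n ≤ A n :=
    conj_mul_self_le_of_le_one (hpovm.1 n) (hpovm.le_one n) (hpovm.1 m) (hpovm.le_one m)
  set E : Fin N → H →L[ℂ] H := Pi.single k P - Pi.single l P
  have hE n : CFC.sqrt (A n) * D n * CFC.sqrt (A n) = E n := by
    have hs := CFC.sqrt_mul_sqrt_self (A n) (hpovm.1 n)
    subst hD
    rcases eq_or_ne n k with rfl | hnk
    · simp [E, hkl, mul_conj_mul_eq_of_mul_self_eq hs, hP]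
    · rcases eq_or_ne n l with rfl | hnl
      · simp [E, hnk, mul_conj_mul_eq_of_mul_self_eq hs, hPsymm]
      · simp [E, hnk, hnl]
  simp only [hE]
  have hplus := hpovm.add_single_sub_single hkl hP₀ (hPsymm ▸ hP_le l k)
  have hminus := hpovm.sub_single_sub_single hkl hP₀ (hP_le k l)
  have hEk : E k ≠ 0 := by simpa [E, hkl] using hPne
  have hplus_ne : (fun n => A n + E n) ≠ A := fun h => hEk (by simpa using congrFun h k)
  have hmid n := eq_half_smul_add_add_half_smul_sub (A n) (E n)
  refine ⟨hplus, hminus, fun h => hplus_ne (funext fun n => ((hmid n).trans ?_).symm), hmid,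
    not_isExtremeDiscretePOVM_of_eq_midpoint hplus hminus hmid hplus_ne⟩
  rw [← congrFun h n, ← add_smul, add_halves, one_smul]
end
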